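/- arXiv:2508.08472 — 5 statements merged into one kernel-verified Lean document; each statement's English description precedes it below -/
import Mathlib

section
/- Let p be an odd prime, K = ℚ(√p), and set δ = 1 if p ≡ 1 (mod 4) and δ = 2 if p ≡ 3 (mod 4). Let ε = (δ/2)(t + u√p) be the fundamental unit of K, where t, u are positive integers, and let 𝔭 be the unique prime ideal of O_K above p (so 𝔭² = pO_K). Then p divides u if and only if ε^(p−1) ≡ 1 (mod 𝔭²). In particular, the Ankeny–Artin–Chowla conjecture (for p ≡ 1 mod 4) and Mordell's conjecture (for p ≡ 3 mod 4) fail at p exactly when 𝔭 is a base-ε Wieferich prime. -/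
/-!
Write `2ε = a + b√p` with `a = δt`, `b = δu`. Since `√p ∈ 𝔭`, we get `p = √p² ∈ 𝔭²`, so
`𝓞_K/𝔭²` has characteristic `p` and `√p` squares to zero there. Frobenius then gives
`(2ε)^p ≡ a^p ≡ a`, hence `2ε(ε^(p-1) - 1) ≡ -b√p (mod 𝔭²)`. As `2ε` is a unit and `√p ∉ 𝔭²`
(otherwise `N(𝔭)⁴ ∣ N(p) = p²` with `N(𝔭) = p`), `ε^(p-1) ≡ 1` iff `p ∣ b`, i.e. iff `p ∣ u`
because `p ∤ δ`.
-/

open NumberField Polynomial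

section CharP

variable {R : Type*} [CommRing R] {p : ℕ} [Fact p.Prime] [CharP R p]

theorem natCast_pow_char (a : ℕ) : (a : R) ^ p = a := by
  rw [← frobenius_def, map_natCast]

theorem pow_sub_one_eq_one_iff_dvd (hp2 : p ≠ 2) {E s : R} (hE : IsUnit E) (hs : s ^ 2 = 0)
    (hs0 : s ≠ 0) {a b : ℕ} (h : 2 * E = a + b * s) : E ^ (p - 1) = 1 ↔ p ∣ b := by
  have hp : p.Prime := Fact.out
  have h2Ep : 2 * E ^ p = a := by
    calc 2 * E ^ p = (2 * E) ^ p := by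
          rw [mul_pow, ← Nat.cast_ofNat, natCast_pow_char]
      _ = a := by
          rw [h, add_pow_char, mul_pow, pow_eq_zero_of_le hp.two_le hs, mul_zero, add_zero,
            natCast_pow_char]
  have hEp : E ^ (p - 1) * E = E ^ p := pow_sub_one_mul hp.ne_zero E
  have h2E : IsUnit (2 * E) := ((CharP.isUnit_ofNat_iff hp).2 fun h2 =>
    hp2 ((Nat.prime_dvd_prime_iff_eq hp Nat.prime_two).1 h2)).mul hE
  calc E ^ (p - 1) = 1 ↔ 2 * E * (E ^ (p - 1) - 1) = 0 := by
        rw [h2E.mul_right_eq_zero, sub_eq_zero]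
    _ ↔ (b : R) * s = 0 := by
        rw [show 2 * E * (E ^ (p - 1) - 1) = -(b * s) by linear_combination 2 * hEp + h2Ep - h,
          neg_eq_zero]
    _ ↔ p ∣ b := by
        refine ⟨fun hbs => ?_, fun hb => by rw [(CharP.cast_eq_zero_iff R p b).2 hb, zero_mul]⟩
        by_contra hb
        exact hs0 (((CharP.isUnit_natCast_iff hp).2 hb).mul_right_eq_zero.1 hbs)

end CharP

theorem charP_quotient_of_natCast_mem {R : Type*} [CommRing R] {I : Ideal R} (hI : I ≠ ⊤)
    {p : ℕ} (hp : p.Prime) (h : (p : R) ∈ I) : CharP (R ⧸ I) p :=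
  have := Ideal.Quotient.nontrivial_iff.2 hI
  (CharP.charP_iff_prime_eq_zero hp).2 <| by
    rwa [← map_natCast (Ideal.Quotient.mk I), Ideal.Quotient.eq_zero_iff_mem]

theorem mem_sq_of_sq_eq {R : Type*} [CommRing R] {𝔭 : Ideal R} [𝔭.IsPrime] {s x : R}
    (hs : s ^ 2 = x) (hx : x ∈ 𝔭) : x ∈ 𝔭 ^ 2 :=
  hs ▸ Ideal.pow_mem_pow (Ideal.IsPrime.mem_of_pow_mem ‹_› 2 (hs ▸ hx)) 2

theorem exists_ringOfIntegers_sq_eq_natCast {K : Type*} [Field K] {x : K} {n : ℕ} (hx : x ^ 2 = n) :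
    ∃ s : 𝓞 K, s ^ 2 = n ∧ algebraMap (𝓞 K) K s = x :=
  ⟨⟨x, X ^ 2 - C (n : ℤ), monic_X_pow_sub_C _ two_ne_zero, by simp [hx]⟩,
    RingOfIntegers.ext <| (map_pow _ _ _).trans (hx.trans (map_natCast _ n).symm), rfl⟩

theorem finrank_eq_two_of_adjoin_sqrt {K : Type*} [Field K] [CharZero K] {p : ℕ} (hp : p.Prime)
    {x : K} (hx : x ^ 2 = p) (hK : Algebra.adjoin ℚ {x} = ⊤) : Module.finrank ℚ K = 2 := by
  have hirr : Irreducible (X ^ 2 - C (p : ℚ)) :=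
    X_pow_sub_C_irreducible_of_prime Nat.prime_two fun b hb =>
      hp.not_isSquare (Rat.isSquare_natCast_iff.1 ⟨b, by rw [← hb, sq]⟩)
  have hroot : aeval x (X ^ 2 - C (p : ℚ)) = 0 := by simp [hx]
  have hmonic : (X ^ 2 - C (p : ℚ)).Monic := monic_X_pow_sub_C _ two_ne_zero
  have hint : IsIntegral ℚ x := ⟨_, hmonic, hroot⟩
  rw [(PowerBasis.ofAdjoinEqTop hint hK).finrank, PowerBasis.ofAdjoinEqTop_dim,
    ← minpoly.eq_of_irreducible_of_monic hirr hroot hmonic, natDegree_X_pow_sub_C]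

section NumberField

variable {K : Type*} [Field K] [NumberField K]

theorem absNorm_pow_dvd_of_natCast_mem_pow {𝔭 : Ideal (𝓞 K)} {n k : ℕ}
    (h : (n : 𝓞 K) ∈ 𝔭 ^ k) : Ideal.absNorm 𝔭 ^ k ∣ n ^ Module.finrank ℚ K := by
  rw [← map_pow, ← RingOfIntegers.rank, ← Ideal.absNorm_span_natCast]
  exact Ideal.absNorm_dvd_absNorm_of_le ((Ideal.span_singleton_le_iff_mem _).2 h)

theorem exists_isPrime_natCast_mem {p : ℕ} (hp : p.Prime) :
    ∃ 𝔭 : Ideal (𝓞 K), 𝔭.IsPrime ∧ (p : 𝓞 K) ∈ 𝔭 := by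
  have hne : Ideal.span {(p : 𝓞 K)} ≠ ⊤ := by
    rw [Ne, ← Ideal.absNorm_eq_one_iff, Ideal.absNorm_span_natCast, Nat.pow_eq_one]
    exact not_or.2 ⟨hp.ne_one, Module.finrank_pos.ne'⟩
  obtain ⟨𝔭, h𝔭, hle⟩ := Ideal.exists_le_maximal _ hne
  exact ⟨𝔭, h𝔭.isPrime, hle (Ideal.mem_span_singleton_self _)⟩

variable {p : ℕ} {s : 𝓞 K} {𝔭 : Ideal (𝓞 K)} [𝔭.IsPrime]

theorem absNorm_eq_of_natCast_mem_sq (hp : p.Prime) (hK : Module.finrank ℚ K = 2)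
    (h : (p : 𝓞 K) ∈ 𝔭 ^ 2) : Ideal.absNorm 𝔭 = p := by
  have hdvd : Ideal.absNorm 𝔭 ∣ p := by
    simpa [hK, Nat.pow_dvd_pow_iff two_ne_zero] using absNorm_pow_dvd_of_natCast_mem_pow h
  exact ((Nat.dvd_prime hp).1 hdvd).resolve_left
    (mt Ideal.absNorm_eq_one_iff.1 (Ideal.IsPrime.ne_top ‹_›))

theorem sqrt_notMem_sq (hp : p.Prime) (hK : Module.finrank ℚ K = 2) (hs : s ^ 2 = p)
    (hp𝔭 : (p : 𝓞 K) ∈ 𝔭) : s ∉ 𝔭 ^ 2 := by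
  intro hs𝔭
  have h4 : (p : 𝓞 K) ∈ 𝔭 ^ 4 := hs ▸ pow_mul 𝔭 2 2 ▸ Ideal.pow_mem_pow hs𝔭 2
  have := absNorm_pow_dvd_of_natCast_mem_pow h4
  rw [absNorm_eq_of_natCast_mem_sq hp hK (mem_sq_of_sq_eq hs hp𝔭), hK,
    Nat.pow_dvd_pow_iff_le_right hp.one_lt] at this
  omega

theorem pow_sub_one_sub_one_mem_sq_iff (hp : p.Prime) (hp2 : p ≠ 2) (hK : Module.finrank ℚ K = 2)
    (hs : s ^ 2 = p) (hp𝔭 : (p : 𝓞 K) ∈ 𝔭) (E : (𝓞 K)ˣ) {a b : ℕ}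
    (h : 2 * (E : 𝓞 K) = a + b * s) : (E : 𝓞 K) ^ (p - 1) - 1 ∈ 𝔭 ^ 2 ↔ p ∣ b := by
  have : Fact p.Prime := ⟨hp⟩
  have : CharP (𝓞 K ⧸ 𝔭 ^ 2) p := charP_quotient_of_natCast_mem
    (ne_top_of_le_ne_top (Ideal.IsPrime.ne_top ‹_›) (Ideal.pow_le_self two_ne_zero)) hp
    (mem_sq_of_sq_eq hs hp𝔭)
  let π := Ideal.Quotient.mk (𝔭 ^ 2)
  rw [← Ideal.Quotient.eq_zero_iff_mem, map_sub, map_pow, map_one, sub_eq_zero]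
  refine pow_sub_one_eq_one_iff_dvd hp2 (s := π s) (a := a) (E.isUnit.map π) ?_ ?_ ?_
  · rw [← map_pow, hs, map_natCast, CharP.cast_eq_zero]
  · rw [Ne, Ideal.Quotient.eq_zero_iff_mem]
    exact sqrt_notMem_sq hp hK hs hp𝔭
  · simpa [map_ofNat] using congrArg π h

end NumberField

theorem AAC_Mordell_iff_wieferich_general
    {K : Type*} [Field K] [NumberField K]
    (p : ℕ) (hp : p.Prime) (hodd : Odd p)
    (sqrtp : K) (hsqrtp : sqrtp ^ 2 = (p : K))
    (hK : Algebra.adjoin ℚ {sqrtp} = ⊤)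
    (δ : ℕ) (hδ1 : p % 4 = 1 → δ = 1) (hδ2 : p % 4 = 3 → δ = 2)
    (ε : (𝓞 K)ˣ) (t u : ℕ)
    (hε : ((ε : 𝓞 K) : K) = (δ : K) / 2 * ((t : K) + (u : K) * sqrtp)) :
    (p ∣ u ↔
      ∀ 𝔭 : Ideal (𝓞 K), 𝔭.IsPrime → (p : 𝓞 K) ∈ 𝔭 →
        (ε : 𝓞 K) ^ (p - 1) - 1 ∈ 𝔭 ^ 2) ∧
    (p ∣ u ↔
      ∀ 𝔭 : Ideal (𝓞 K), 𝔭.IsPrime → (p : 𝓞 K) ∈ 𝔭 →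
        (ε : 𝓞 K) ^ (Ideal.absNorm 𝔭 - 1) - 1 ∈ 𝔭 ^ 2) := by
  have hp2 : p ≠ 2 := by rintro rfl; exact absurd hodd (by decide)
  have hδ : ¬p ∣ δ := by
    rcases Nat.odd_mod_four_iff.1 (Nat.odd_iff.1 hodd) with h | h
    · rw [hδ1 h]; exact hp.not_dvd_one
    · rw [hδ2 h]; exact fun hd => hp2 ((Nat.prime_dvd_prime_iff_eq hp Nat.prime_two).1 hd)
  obtain ⟨s, hs, hsK⟩ := exists_ringOfIntegers_sq_eq_natCast hsqrtp
  have hK2 := finrank_eq_two_of_adjoin_sqrt hp hsqrtp hK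
  have h2ε : 2 * (ε : 𝓞 K) = (δ * t : ℕ) + (δ * u : ℕ) * s := RingOfIntegers.ext <| by
    simp only [map_mul, map_add, map_natCast, map_ofNat, hε, hsK]
    push_cast
    ring
  have key : ∀ 𝔭 : Ideal (𝓞 K), 𝔭.IsPrime → (p : 𝓞 K) ∈ 𝔭 →
      Ideal.absNorm 𝔭 = p ∧ ((ε : 𝓞 K) ^ (p - 1) - 1 ∈ 𝔭 ^ 2 ↔ p ∣ u) := fun 𝔭 _ hp𝔭 =>
    ⟨absNorm_eq_of_natCast_mem_sq hp hK2 (mem_sq_of_sq_eq hs hp𝔭),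
      (pow_sub_one_sub_one_mem_sq_iff hp hp2 hK2 hs hp𝔭 ε h2ε).trans
        ((Nat.Prime.dvd_mul hp).trans (or_iff_right hδ))⟩
  obtain ⟨𝔭, h𝔭, hp𝔭⟩ := exists_isPrime_natCast_mem (K := K) hp
  have wieferich : p ∣ u ↔ ∀ 𝔭 : Ideal (𝓞 K), 𝔭.IsPrime → (p : 𝓞 K) ∈ 𝔭 →
      (ε : 𝓞 K) ^ (p - 1) - 1 ∈ 𝔭 ^ 2 :=
    ⟨fun hu 𝔮 h𝔮 hp𝔮 => (key 𝔮 h𝔮 hp𝔮).2.2 hu, fun H => (key 𝔭 h𝔭 hp𝔭).2.1 (H 𝔭 h𝔭 hp𝔭)⟩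
  refine ⟨wieferich, wieferich.trans ?_⟩
  refine forall_congr' fun 𝔮 => forall_congr' fun h𝔮 => forall_congr' fun hp𝔮 => ?_
  rw [(key 𝔮 h𝔮 hp𝔮).1]

/-- **Theorem (Ankeny--Artin--Chowla/Mordell and Wieferich primes).**
Let `p` be an odd prime, `K = ℚ(√p)` (generated over `ℚ` by `sqrtp` with `sqrtp² = p`),
`δ = 1` if `p ≡ 1 (mod 4)` and `δ = 2` if `p ≡ 3 (mod 4)`, and let
`ε = (δ/2)(t + u√p)` be the fundamental unit of `K`.  Then `p ∣ u` iff
`ε^(p-1) ≡ 1 (mod 𝔭²)` for the prime `𝔭` above `p`; equivalently (since `N(𝔭) = p`),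
iff `𝔭` is a base-`ε` Wieferich prime, i.e. `ε^(N(𝔭)-1) ≡ 1 (mod 𝔭²)`. -/
theorem AAC_Mordell_iff_wieferich
    {K : Type*} [Field K] [NumberField K]
    (p : ℕ) (hp : p.Prime) (hodd : Odd p)
    (sqrtp : K) (hsqrtp : sqrtp ^ 2 = (p : K))
    (hK : Algebra.adjoin ℚ {sqrtp} = ⊤)
    (σ : K →+* ℝ) (hσ : 0 < σ sqrtp)
    (δ : ℕ) (hδ1 : p % 4 = 1 → δ = 1) (hδ2 : p % 4 = 3 → δ = 2)
    (ε : (𝓞 K)ˣ) (t u : ℕ) (ht : 0 < t) (hu : 0 < u)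
    (hε : ((ε : 𝓞 K) : K) = (δ : K) / 2 * ((t : K) + (u : K) * sqrtp))
    (hεpos : 1 < σ (ε : 𝓞 K))
    (hfund : ∀ η : (𝓞 K)ˣ, ∃ k : ℤ, η = ε ^ k ∨ η = -ε ^ k) :
    (p ∣ u ↔
      ∀ 𝔭 : Ideal (𝓞 K), 𝔭.IsPrime → (p : 𝓞 K) ∈ 𝔭 →
        (ε : 𝓞 K) ^ (p - 1) - 1 ∈ 𝔭 ^ 2) ∧
    (p ∣ u ↔
      ∀ 𝔭 : Ideal (𝓞 K), 𝔭.IsPrime → (p : 𝓞 K) ∈ 𝔭 →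
        (ε : 𝓞 K) ^ (Ideal.absNorm 𝔭 - 1) - 1 ∈ 𝔭 ^ 2) :=
  AAC_Mordell_iff_wieferich_general p hp hodd sqrtp hsqrtp hK δ hδ1 hδ2 ε t u hε
end

section
/- Let K be an algebraic number field and let a, b, c be nonzero elements of O_K that are pairwise coprime (no prime ideal of O_K contains two of them) and satisfy a + b = c. Then max(N(a), N(b), N(c)) ≤ H_K(a, b, c), where N(x) = |N_{K/ℚ}(x)| is the absolute value of the field norm. -/
/-!
Pairwise coprimality makes every finite local factor of the height equal to `1`: at each prime
one of `a`, `b` is a unit, and all finite absolute values of an algebraic integer are `≤ 1`.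
So `H_K(a, b, c)` is the product over the infinite places of the local maxima, which dominates
`∏_w ‖x‖_w = |N_{K/ℚ}(x)|` for each `x ∈ {a, b, c}`.
-/

open NumberField IsDedekindDomain

/-- The normalized absolute value attached to the finite place `v` of `K`:
`‖x‖_v = N(𝔭_v) ^ (-ord_{𝔭_v} x)`, and `‖0‖_v = 0`. -/
noncomputable def finNorm (K : Type*) [Field K] [NumberField K]
    (v : HeightOneSpectrum (𝓞 K)) (x : K) : ℝ :=
  ((WithZeroMulInt.toNNReal
      (show ((Ideal.absNorm v.asIdeal : NNReal)) ≠ 0 by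
        simp [Ideal.absNorm_eq_zero_iff, v.ne_bot])
      (v.valuation K x) : NNReal) : ℝ)

/-- The height `H_K(a,b,c) = ∏_{v ∈ M_K} max(‖a‖_v, ‖b‖_v, ‖c‖_v)`, where for an infinite
place `v` the local factor is `|σ_v ·|` (real `v`) or `|σ_v ·|²` (complex `v`). -/
noncomputable def heightTriple (K : Type*) [Field K] [NumberField K] (a b c : K) : ℝ :=
  (∏ v : InfinitePlace K, max (max (v a ^ v.mult) (v b ^ v.mult)) (v c ^ v.mult)) *
  (∏ᶠ v : HeightOneSpectrum (𝓞 K),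
    max (max (finNorm K v a) (finNorm K v b)) (finNorm K v c))

/-- The ramification index `e(𝔭|p)` of a finite place over the rational prime below it. -/
noncomputable def ramIdx (K : Type*) [Field K] [NumberField K]
    (v : HeightOneSpectrum (𝓞 K)) : ℕ :=
  Ideal.ramificationIdx'
    (Ideal.comap (algebraMap ℤ (𝓞 K)) v.asIdeal) v.asIdeal

/-- The ramified support `Q_K(a,b,c) = ∏ N(𝔭)^{e(𝔭|p)}`, the product over those primes `𝔭`
for which `‖a‖_𝔭, ‖b‖_𝔭, ‖c‖_𝔭` are not all equal. -/
noncomputable def ramSupportTriple (K : Type*) [Field K] [NumberField K] (a b c : K) : ℝ :=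
  ∏ᶠ v : HeightOneSpectrum (𝓞 K),
    if ¬ (finNorm K v a = finNorm K v b ∧ finNorm K v b = finNorm K v c) then
      (Ideal.absNorm v.asIdeal : ℝ) ^ ramIdx K v
    else 1

namespace NumberField

variable {K : Type*} [Field K] [NumberField K]

-- `finNorm K v` is definitionally Mathlib's `HeightOneSpectrum.adicAbv K v`.
theorem finNorm_coe_le_one (v : HeightOneSpectrum (𝓞 K)) (x : 𝓞 K) : finNorm K v x ≤ 1 :=
  v.adicAbv_coe_le_one (HeightOneSpectrum.one_lt_absNorm_nnreal v) x

theorem finNorm_coe_eq_one_iff (v : HeightOneSpectrum (𝓞 K)) (x : 𝓞 K) :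
    finNorm K v x = 1 ↔ x ∉ v.asIdeal :=
  v.adicAbv_coe_eq_one_iff (HeightOneSpectrum.one_lt_absNorm_nnreal v) x

theorem natAbs_norm_eq_prod_infinitePlace (x : 𝓞 K) :
    ((Algebra.norm ℤ x).natAbs : ℝ) = ∏ w : InfinitePlace K, w x ^ w.mult := by
  rw [InfinitePlace.prod_eq_abs_norm, ← Algebra.coe_norm_int, Nat.cast_natAbs]
  push_cast; rfl

theorem max_finNorm_coe_eq_one (v : HeightOneSpectrum (𝓞 K)) {x y : 𝓞 K} (z : 𝓞 K)
    (hxy : ¬ (x ∈ v.asIdeal ∧ y ∈ v.asIdeal)) :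
    max (max (finNorm K v x) (finNorm K v y)) (finNorm K v z) = 1 := by
  refine le_antisymm (max_le (max_le ?_ ?_) ?_) ?_
  any_goals exact finNorm_coe_le_one v _
  rcases not_and_or.mp hxy with hx | hy
  · exact ((finNorm_coe_eq_one_iff v x).2 hx).symm.le.trans (le_max_of_le_left (le_max_left _ _))
  · exact ((finNorm_coe_eq_one_iff v y).2 hy).symm.le.trans (le_max_of_le_left (le_max_right _ _))

end NumberField

theorem max_norm_le_heightTriple_general
    {K : Type*} [Field K] [NumberField K]
    (a b c : 𝓞 K)
    (hcop : ∀ 𝔭 : Ideal (𝓞 K), 𝔭.IsPrime → 𝔭 ≠ ⊥ →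
      ¬ (a ∈ 𝔭 ∧ b ∈ 𝔭) ∧ ¬ (a ∈ 𝔭 ∧ c ∈ 𝔭) ∧ ¬ (b ∈ 𝔭 ∧ c ∈ 𝔭)) :
    max (max ((Algebra.norm ℤ a).natAbs : ℝ) ((Algebra.norm ℤ b).natAbs : ℝ))
        ((Algebra.norm ℤ c).natAbs : ℝ) ≤ heightTriple K (a : K) (b : K) (c : K) := by
  have hfin (v : HeightOneSpectrum (𝓞 K)) :=
    max_finNorm_coe_eq_one v c (hcop v.asIdeal v.isPrime v.ne_bot).1
  rw [heightTriple, finprod_congr hfin, finprod_one, mul_one]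
  simp only [natAbs_norm_eq_prod_infinitePlace]
  refine max_le (max_le ?_ ?_) ?_ <;> gcongr with w
  · exact le_max_of_le_left (le_max_left _ _)
  · exact le_max_of_le_left (le_max_right _ _)
  · exact le_max_right _ _

/-- **Lemma (lower bound for the height).**
If `a, b, c` are nonzero elements of `𝓞 K`, pairwise coprime in the sense that no nonzero
prime ideal contains two of them, and `a + b = c`, then
`max(N(a), N(b), N(c)) ≤ H_K(a, b, c)`. -/
theorem max_norm_le_heightTriple
    {K : Type*} [Field K] [NumberField K]
    (a b c : 𝓞 K) (ha : a ≠ 0) (hb : b ≠ 0) (hc : c ≠ 0)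
    (hcop : ∀ 𝔭 : Ideal (𝓞 K), 𝔭.IsPrime → 𝔭 ≠ ⊥ →
      ¬ (a ∈ 𝔭 ∧ b ∈ 𝔭) ∧ ¬ (a ∈ 𝔭 ∧ c ∈ 𝔭) ∧ ¬ (b ∈ 𝔭 ∧ c ∈ 𝔭))
    (habc : a + b = c) :
    max (max ((Algebra.norm ℤ a).natAbs : ℝ) ((Algebra.norm ℤ b).natAbs : ℝ))
        ((Algebra.norm ℤ c).natAbs : ℝ) ≤ heightTriple K (a : K) (b : K) (c : K) :=
  max_norm_le_heightTriple_general a b c hcop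
end

section
/- Let K be an algebraic number field, α ∈ O_K an admissible Wieferich base, and 𝔭 a nonzero prime ideal of O_K with α ∉ 𝔭. Let f_α(𝔭) be the multiplicative order of α modulo 𝔭 and δ_α(𝔭) = ord_𝔭((α^{f_α(𝔭)} − 1)O_K). Then ord_𝔭((Φ_{f_α(𝔭)}(α))O_K) = δ_α(𝔭), where Φ_m denotes the m-th cyclotomic polynomial. -/
open NumberField

/-- `ordIdeal P I` is the exponent of the prime ideal `P` in the prime ideal
factorization of the ideal `I` of `𝓞 K`. -/
noncomputable def ordIdeal {K : Type*} [Field K] [NumberField K] (P I : Ideal (𝓞 K)) : ℕ :=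
  @Multiset.count _ (Classical.decEq _) P (UniqueFactorizationMonoid.normalizedFactors I)

/-- **Lemma.** Let `α ∈ 𝓞 K` be an admissible Wieferich base (nonzero, not a root of
unity), `𝔭` a nonzero prime ideal with `α ∉ 𝔭`, `f = f_α(𝔭)` the multiplicative order of
`α` mod `𝔭`, and `δ = ord_𝔭((α^f - 1))`.  Then `ord_𝔭((Φ_f(α))) = δ`. -/
theorem ord_cyclotomic_orderExponent
    {K : Type*} [Field K] [NumberField K]
    (α : 𝓞 K) (hα0 : α ≠ 0) (hαu : ∀ n : ℕ, 0 < n → α ^ n ≠ 1)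
    (P : Ideal (𝓞 K)) (hP : P.IsPrime) (hPbot : P ≠ ⊥) (hαP : α ∉ P)
    (f : ℕ) (hf : 0 < f) (hf1 : α ^ f - 1 ∈ P)
    (hfmin : ∀ m : ℕ, 0 < m → α ^ m - 1 ∈ P → f ≤ m) :
    ordIdeal P (Ideal.span {Polynomial.eval α (Polynomial.cyclotomic f (𝓞 K))}) =
      ordIdeal P (Ideal.span {α ^ f - 1}) := by
  classical
  haveI := hP
  have hne : α ^ f - 1 ≠ 0 := sub_ne_zero.mpr (hαu f hf)
  have hprod : α ^ f - 1 = ∏ d ∈ f.divisors, Polynomial.eval α (Polynomial.cyclotomic d (𝓞 K)) := by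
    have h := Polynomial.prod_cyclotomic_eq_X_pow_sub_one hf (𝓞 K)
    calc α ^ f - 1 = Polynomial.eval α (Polynomial.X ^ f - 1) := by simp
    _ = Polynomial.eval α (∏ d ∈ f.divisors, Polynomial.cyclotomic d (𝓞 K)) := by rw [h]
    _ = _ := by rw [Polynomial.eval_prod]
  set y : 𝓞 K := ∏ d ∈ f.divisors.erase f, Polynomial.eval α (Polynomial.cyclotomic d (𝓞 K)) with hy
  have hfmem : f ∈ f.divisors := Nat.mem_divisors_self f hf.ne'
  have hsplit : α ^ f - 1 = Polynomial.eval α (Polynomial.cyclotomic f (𝓞 K)) * y := by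
    rw [hprod, ← Finset.mul_prod_erase _ _ hfmem]
  -- y ∉ P
  have hyP : y ∉ P := by
    intro hyp
    obtain ⟨d, hd, hdP⟩ := Ideal.IsPrime.prod_mem_iff.mp hyp
    have hd' := Finset.mem_erase.mp hd
    have hddvd : d ∣ f := (Nat.mem_divisors.mp hd'.2).1
    have hdpos : 0 < d := Nat.pos_of_mem_divisors hd'.2
    have hmem : α ^ d - 1 ∈ P := by
      obtain ⟨q, hq⟩ := Polynomial.cyclotomic.dvd_X_pow_sub_one d (𝓞 K)
      have heq : α ^ d - 1 = Polynomial.eval α (Polynomial.cyclotomic d (𝓞 K)) * Polynomial.eval α q := by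
        have := congrArg (Polynomial.eval α) hq
        simpa using this
      rw [heq]; exact Ideal.mul_mem_right _ _ hdP
    exact absurd (Nat.lt_of_le_of_ne (Nat.le_of_dvd hf hddvd) hd'.1)
      (not_lt.mpr (hfmin d hdpos hmem))
  have hy0 : y ≠ 0 := fun h => hyP (h ▸ P.zero_mem)
  have hΦ0 : Polynomial.eval α (Polynomial.cyclotomic f (𝓞 K)) ≠ 0 := by
    intro h
    rw [h, zero_mul] at hsplit
    exact hne hsplit
  -- ord of y is 0
  have hordy : ordIdeal P (Ideal.span {y}) = 0 := by
    unfold ordIdeal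
    rw [Multiset.count_eq_zero]
    intro hmem
    have hdvd : P ∣ Ideal.span {y} :=
      UniqueFactorizationMonoid.dvd_of_mem_normalizedFactors hmem
    have : Ideal.span {y} ≤ P := Ideal.le_of_dvd hdvd
    exact hyP (this (Ideal.mem_span_singleton_self y))
  -- multiplicativity
  have hspan : Ideal.span {α ^ f - 1} =
      Ideal.span {Polynomial.eval α (Polynomial.cyclotomic f (𝓞 K))} * Ideal.span {y} := by
    rw [Ideal.span_singleton_mul_span_singleton, hsplit]
  have h1 : Ideal.span {Polynomial.eval α (Polynomial.cyclotomic f (𝓞 K))} ≠ 0 := by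
    rw [Ne, Ideal.zero_eq_bot, Ideal.span_singleton_eq_bot]; exact hΦ0
  have h2 : Ideal.span {y} ≠ (0 : Ideal (𝓞 K)) := by
    rw [Ne, Ideal.zero_eq_bot, Ideal.span_singleton_eq_bot]; exact hy0
  unfold ordIdeal at hordy ⊢
  rw [hspan, UniqueFactorizationMonoid.normalizedFactors_mul h1 h2, Multiset.count_add, hordy,
    add_zero]
end

section
/- Let K be an algebraic number field, α ∈ O_K an admissible Wieferich base, and p an odd rational prime that is unramified in K. Let 𝔭 be a prime ideal of O_K above p with α ∉ 𝔭, let f = f_α(𝔭) be the multiplicative order of α modulo 𝔭, and let δ = ord_𝔭((α^f − 1)O_K). Then for every positive integer n: ord_𝔭((Φ_n(α))O_K) = δ if n = f; ord_𝔭((Φ_n(α))O_K) = 1 if n = p^i·f for some i ≥ 1; and ord_𝔭((Φ_n(α))O_K) = 0 otherwise. -/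
/-!
Write `v = ord_𝔭`. Since `Φ_d(α)` divides `α^d - 1`, it is prime to `𝔭` unless `f ∣ d`, so
`∏_{d ∣ n} Φ_d(α) = α^n - 1` gives `∑_{e ∣ m} v(Φ_{ef}(α)) = v(α^{mf} - 1)`. Lifting the
exponent computes the right side as `δ + v_p(m)`: for `x ≡ 1 mod 𝔭` the quotient
`(x^t - 1)/(x - 1) = 1 + x + ⋯ + x^{t-1}` is `≡ t mod 𝔭`, a `𝔭`-unit when `p ∤ t`, and for
`t = p` it is `≡ p mod 𝔭²` (as `p` is odd), hence of valuation exactly `1` because `p` is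
unramified. So `e ↦ v(Φ_{ef}(α))` has the divisor sums `m ↦ δ + v_p(m)`, which pins it down as
the function that is `δ` at `1`, `1` at the powers `p^i` with `i ≥ 1`, and `0` elsewhere.
-/

open NumberField

section CommRing

variable {R : Type*} [CommRing R]

theorem Ideal.natCast_mem_iff_dvd {P : Ideal R} [P.IsPrime] {p : ℕ} (hp : p.Prime)
    (hpP : (p : R) ∈ P) (t : ℕ) : (t : R) ∈ P ↔ p ∣ t := by
  have : CharP (R ⧸ P) p := (CharP.charP_iff_prime_eq_zero hp).2 <| by
    rw [← map_natCast (Ideal.Quotient.mk P)]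
    exact Ideal.Quotient.eq_zero_iff_mem.2 hpP
  rw [← Ideal.Quotient.eq_zero_iff_mem, map_natCast, CharP.cast_eq_zero_iff (R ⧸ P) p]

theorem pow_sub_one_mem_iff_dvd {I : Ideal R} {a : R} {f : ℕ} (hf : 0 < f)
    (hf1 : a ^ f - 1 ∈ I) (hfmin : ∀ m, 0 < m → a ^ m - 1 ∈ I → f ≤ m) (m : ℕ) :
    a ^ m - 1 ∈ I ↔ f ∣ m := by
  have hmem (k : ℕ) : a ^ k - 1 ∈ I ↔ Ideal.Quotient.mk I a ^ k = 1 := by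
    rw [← map_pow, ← map_one (Ideal.Quotient.mk I), Ideal.Quotient.eq]
  have horder : orderOf (Ideal.Quotient.mk I a) = f :=
    (orderOf_eq_iff hf).2 ⟨(hmem f).1 hf1, fun k hkf hk hak =>
      (hfmin k hk ((hmem k).2 hak)).not_gt hkf⟩
  rw [hmem, ← orderOf_dvd_iff_pow_eq_one, horder]

theorem geom_sum_sub_natCast_mem {I : Ideal R} {x : R} (hx : x - 1 ∈ I) (t : ℕ) :
    ∑ j ∈ Finset.range t, x ^ j - t ∈ I := by
  rw [← Ideal.Quotient.eq, map_one] at hx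
  rw [← Ideal.Quotient.eq_zero_iff_mem, map_sub, map_sum, map_natCast]
  simp [hx]

theorem geom_sum_sub_natCast_mem_sq {I : Ideal R} {x : R} (hx : x - 1 ∈ I) {p : ℕ}
    (hpodd : Odd p) (hpI : (p : R) ∈ I) :
    ∑ j ∈ Finset.range p, x ^ j - p ∈ I ^ 2 := by
  have hsum : ∑ j ∈ Finset.range p, x ^ j - p
      = (∑ j ∈ Finset.range p, ∑ k ∈ Finset.range j, x ^ k) * (x - 1) := by
    rw [Finset.sum_mul]
    simp only [geom_sum_mul]
    rw [Finset.sum_sub_distrib]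
    simp
  have hgauss : p ∣ ∑ j ∈ Finset.range p, j := by
    obtain ⟨c, rfl⟩ := hpodd
    refine ⟨c, Nat.eq_of_mul_eq_mul_right two_pos ?_⟩
    rw [Finset.sum_range_id_mul_two]
    simp only [add_tsub_cancel_right]
    ring
  have hW : ∑ j ∈ Finset.range p, ∑ k ∈ Finset.range j, x ^ k ∈ I := by
    have h1 : ∑ j ∈ Finset.range p, (∑ k ∈ Finset.range j, x ^ k - j) ∈ I :=
      I.sum_mem fun j _ => geom_sum_sub_natCast_mem hx j
    have h2 : ((∑ j ∈ Finset.range p, j : ℕ) : R) ∈ I := by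
      obtain ⟨c, hc⟩ := hgauss
      rw [hc, Nat.cast_mul]
      exact I.mul_mem_right _ hpI
    simpa [Finset.sum_sub_distrib] using I.add_mem h1 h2
  rw [hsum, pow_two]
  exact Ideal.mul_mem_mul hW hx

theorem Polynomial.eval_cyclotomic_dvd_pow_sub_one (a : R) (n : ℕ) :
    (Polynomial.cyclotomic n R).eval a ∣ a ^ n - 1 := by
  simpa using Polynomial.eval_dvd (x := a) (Polynomial.cyclotomic.dvd_X_pow_sub_one n R)

end CommRing

theorem Ideal.algebraMap_notMem_sq_of_ramificationIdx'_eq_one {R S : Type*} [CommRing R]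
    [CommRing S] [Algebra R S] [IsDedekindDomain S] {p : R} {P : Ideal S} [hP : P.IsPrime]
    (hPbot : P ≠ ⊥) (hp : algebraMap R S p ≠ 0) (he : (Ideal.span {p}).ramificationIdx' P = 1) :
    algebraMap R S p ∉ P ^ 2 := by
  classical
  intro h
  have hmap : Ideal.map (algebraMap R S) (Ideal.span {p}) = Ideal.span {algebraMap R S p} := by
    rw [Ideal.map_span, Set.image_singleton]
  have hspan : Ideal.span {algebraMap R S p} ≠ ⊥ := by simpa using hp
  have hcount := Ideal.IsDedekindDomain.ramificationIdx'_eq_normalizedFactors_count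
    (hmap ▸ hspan) hP hPbot
  have h2 := pow_dvd_iff_le_emultiplicity.1
    (Ideal.dvd_iff_le.2 ((Ideal.span_singleton_le_iff_mem _).2 h))
  rw [UniqueFactorizationMonoid.emultiplicity_eq_count_normalizedFactors
    (Ideal.prime_of_isPrime hPbot hP).irreducible hspan, normalize_eq, ← hmap, ← hcount, he] at h2
  norm_num at h2

section SumDivisors

variable {g : ℕ → ℕ} {p c : ℕ}

theorem sum_range_apply_prime_pow_of_sum_divisors_eq (hp : p.Prime)
    (hg : ∀ m ≠ 0, ∑ d ∈ m.divisors, g d = c + m.factorization p) (k : ℕ) :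
    ∑ i ∈ Finset.range (k + 1), g (p ^ i) = c + k := by
  rw [← Nat.sum_divisors_prime_pow hp, hg _ (pow_ne_zero k hp.ne_zero)]
  simp [hp]

theorem apply_one_of_sum_divisors_eq
    (hg : ∀ m ≠ 0, ∑ d ∈ m.divisors, g d = c + m.factorization p) : g 1 = c := by
  simpa using hg 1 one_ne_zero

theorem apply_prime_pow_succ_of_sum_divisors_eq (hp : p.Prime)
    (hg : ∀ m ≠ 0, ∑ d ∈ m.divisors, g d = c + m.factorization p) (k : ℕ) :
    g (p ^ (k + 1)) = 1 := by
  have h := sum_range_apply_prime_pow_of_sum_divisors_eq hp hg (k + 1)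
  rw [Finset.sum_range_succ, sum_range_apply_prime_pow_of_sum_divisors_eq hp hg k] at h
  omega

theorem apply_eq_zero_of_sum_divisors_eq (hp : p.Prime)
    (hg : ∀ m ≠ 0, ∑ d ∈ m.divisors, g d = c + m.factorization p) {m : ℕ} (hm : m ≠ 0)
    (hmp : m ≠ p ^ m.factorization p) : g m = 0 := by
  have hdvd := Nat.ordProj_dvd m p
  have hsum := Finset.sum_sdiff (f := g) (Nat.divisors_subset_of_dvd hm hdvd)
  rw [hg m hm, hg _ (pow_ne_zero _ hp.ne_zero)] at hsum
  simp only [hp, Nat.Prime.factorization_pow, Finsupp.single_eq_same] at hsum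
  have hzero : ∑ d ∈ m.divisors \ (p ^ m.factorization p).divisors, g d = 0 := by omega
  refine Finset.sum_eq_zero_iff.1 hzero m (Finset.mem_sdiff.2 ⟨Nat.mem_divisors_self m hm, ?_⟩)
  exact fun h => hmp (Nat.dvd_antisymm (Nat.dvd_of_mem_divisors h) hdvd)

end SumDivisors

section NumberField

open UniqueFactorizationMonoid

variable {K : Type*} [Field K] [NumberField K] {P : Ideal (𝓞 K)} {α : 𝓞 K}

theorem ordIdeal_span_eq [P.IsPrime] {a : 𝓞 K} {k : ℕ} (h : a ∈ P ^ k) (h' : a ∉ P ^ (k + 1)) :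
    ordIdeal P (Ideal.span {a}) = k := by
  classical
  rw [ordIdeal, ← Ideal.span_singleton_le_iff_mem] at *
  convert Ideal.count_normalizedFactors_eq h h'

theorem ordIdeal_span_eq_zero [P.IsPrime] {a : 𝓞 K} (ha : a ∉ P) :
    ordIdeal P (Ideal.span {a}) = 0 :=
  ordIdeal_span_eq (by simp) (by simpa using ha)

theorem ordIdeal_span_mul {a b : 𝓞 K} (ha : a ≠ 0) (hb : b ≠ 0) :
    ordIdeal P (Ideal.span {a * b})
      = ordIdeal P (Ideal.span {a}) + ordIdeal P (Ideal.span {b}) := by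
  classical
  simp only [ordIdeal, ← Ideal.span_singleton_mul_span_singleton]
  rw [normalizedFactors_mul (by simpa using ha) (by simpa using hb)]
  convert Multiset.count_add _ _ _

theorem ordIdeal_span_prod {ι : Type*} (s : Finset ι) {g : ι → 𝓞 K} (hg : ∀ i ∈ s, g i ≠ 0) :
    ordIdeal P (Ideal.span {∏ i ∈ s, g i}) = ∑ i ∈ s, ordIdeal P (Ideal.span {g i}) := by
  classical
  induction s using Finset.induction_on with
  | empty => simp [ordIdeal, ← Ideal.one_eq_top]
  | insert i s hi ih =>
    rw [Finset.prod_insert hi, Finset.sum_insert hi,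
      ordIdeal_span_mul (hg i (s.mem_insert_self i))
        (Finset.prod_ne_zero_iff.2 fun j hj => hg j (Finset.mem_insert_of_mem hj)),
      ih fun j hj => hg j (Finset.mem_insert_of_mem hj)]

theorem ordIdeal_pow_sub_one_of_natCast_notMem [P.IsPrime] {x : 𝓞 K} (hx : x - 1 ∈ P)
    (hx0 : x - 1 ≠ 0) {t : ℕ} (ht : (t : 𝓞 K) ∉ P) :
    ordIdeal P (Ideal.span {x ^ t - 1}) = ordIdeal P (Ideal.span {x - 1}) := by
  have hS : ∑ j ∈ Finset.range t, x ^ j ∉ P := fun hS =>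
    ht (by simpa using P.sub_mem hS (geom_sum_sub_natCast_mem hx t))
  rw [← mul_geom_sum, ordIdeal_span_mul hx0 (ne_of_mem_of_not_mem P.zero_mem hS).symm,
    ordIdeal_span_eq_zero hS, add_zero]

theorem ordIdeal_pow_prime_sub_one [P.IsPrime] {p : ℕ} (hpodd : Odd p) (hpP : (p : 𝓞 K) ∈ P)
    (hpP2 : (p : 𝓞 K) ∉ P ^ 2) {x : 𝓞 K} (hx : x - 1 ∈ P) (hx0 : x - 1 ≠ 0) :
    ordIdeal P (Ideal.span {x ^ p - 1}) = ordIdeal P (Ideal.span {x - 1}) + 1 := by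
  have hS2 := geom_sum_sub_natCast_mem_sq hx hpodd hpP
  have hS : ∑ j ∈ Finset.range p, x ^ j ∈ P ^ 1 := by
    simpa using P.add_mem (Ideal.pow_le_self two_ne_zero hS2) hpP
  have hS' : ∑ j ∈ Finset.range p, x ^ j ∉ P ^ 2 := fun h =>
    hpP2 (by simpa using (P ^ 2).sub_mem h hS2)
  rw [← mul_geom_sum, ordIdeal_span_mul hx0 (ne_of_mem_of_not_mem (P ^ 2).zero_mem hS').symm,
    ordIdeal_span_eq hS hS']

theorem ordIdeal_pow_mul_sub_one [P.IsPrime] (hαu : ∀ n : ℕ, 0 < n → α ^ n ≠ 1) {f : ℕ}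
    (hf : 0 < f) (hord : ∀ m, α ^ m - 1 ∈ P ↔ f ∣ m) {p : ℕ} (hp : p.Prime) (hpodd : Odd p)
    (hpP : (p : 𝓞 K) ∈ P) (hpP2 : (p : 𝓞 K) ∉ P ^ 2) {m : ℕ} (hm : m ≠ 0) :
    ordIdeal P (Ideal.span {α ^ (m * f) - 1})
      = ordIdeal P (Ideal.span {α ^ f - 1}) + m.factorization p := by
  have hmem (k : ℕ) : α ^ (p ^ k * f) - 1 ∈ P := (hord _).2 (dvd_mul_left f _)
  have hne (k : ℕ) : α ^ (p ^ k * f) - 1 ≠ 0 :=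
    sub_ne_zero.2 (hαu _ (Nat.mul_pos (pow_pos hp.pos k) hf))
  have hpow (k : ℕ) : ordIdeal P (Ideal.span {α ^ (p ^ k * f) - 1})
      = ordIdeal P (Ideal.span {α ^ f - 1}) + k := by
    induction k with
    | zero => simp
    | succ k ih =>
      rw [pow_succ, mul_right_comm, pow_mul,
        ordIdeal_pow_prime_sub_one hpodd hpP hpP2 (hmem k) (hne k), ih, add_assoc]
  have ht : ((ordCompl[p] m : ℕ) : 𝓞 K) ∉ P :=
    (Ideal.natCast_mem_iff_dvd hp hpP _).not.2 (Nat.not_dvd_ordCompl hp hm)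
  have hsplit : α ^ (m * f) = (α ^ (p ^ m.factorization p * f)) ^ (ordCompl[p] m) := by
    rw [← pow_mul, mul_right_comm, Nat.ordProj_mul_ordCompl_eq_self]
  rw [hsplit, ordIdeal_pow_sub_one_of_natCast_notMem (hmem _) (hne _) ht, hpow]

theorem sum_divisors_ordIdeal_eval_cyclotomic (hαu : ∀ n : ℕ, 0 < n → α ^ n ≠ 1) {n : ℕ}
    (hn : 0 < n) :
    ∑ d ∈ n.divisors, ordIdeal P (Ideal.span {(Polynomial.cyclotomic d (𝓞 K)).eval α})
      = ordIdeal P (Ideal.span {α ^ n - 1}) := by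
  rw [← ordIdeal_span_prod _ fun d hd => ne_zero_of_dvd_ne_zero
      (sub_ne_zero.2 (hαu d (Nat.pos_of_mem_divisors hd)))
      (Polynomial.eval_cyclotomic_dvd_pow_sub_one α d),
    ← Polynomial.eval_prod, Polynomial.prod_cyclotomic_eq_X_pow_sub_one hn]
  simp

theorem ordIdeal_eval_cyclotomic_eq_zero [P.IsPrime] {d : ℕ} (hd : α ^ d - 1 ∉ P) :
    ordIdeal P (Ideal.span {(Polynomial.cyclotomic d (𝓞 K)).eval α}) = 0 :=
  ordIdeal_span_eq_zero fun h =>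
    hd (P.mem_of_dvd (Polynomial.eval_cyclotomic_dvd_pow_sub_one α d) h)

theorem sum_divisors_ordIdeal_eval_cyclotomic_mul [P.IsPrime]
    (hαu : ∀ n : ℕ, 0 < n → α ^ n ≠ 1) {f : ℕ} (hf : 0 < f) (hord : ∀ m, α ^ m - 1 ∈ P ↔ f ∣ m)
    {m : ℕ} (hm : 0 < m) :
    ∑ e ∈ m.divisors, ordIdeal P (Ideal.span {(Polynomial.cyclotomic (e * f) (𝓞 K)).eval α})
      = ordIdeal P (Ideal.span {α ^ (m * f) - 1}) := by
  have hinj : Set.InjOn (· * f) m.divisors := fun _ _ _ _ => (Nat.mul_left_inj hf.ne').1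
  rw [← sum_divisors_ordIdeal_eval_cyclotomic hαu (Nat.mul_pos hm hf),
    ← Finset.sum_image (g := (· * f)) hinj
      (f := fun d => ordIdeal P (Ideal.span {(Polynomial.cyclotomic d (𝓞 K)).eval α}))]
  refine Finset.sum_subset (fun d hd => ?_) fun d hd hdf => ordIdeal_eval_cyclotomic_eq_zero ?_
  · obtain ⟨e, he, rfl⟩ := Finset.mem_image.1 hd
    exact Nat.mem_divisors.2 ⟨Nat.mul_dvd_mul_right (Nat.dvd_of_mem_divisors he) f,
      (Nat.mul_pos hm hf).ne'⟩
  · intro hdm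
    obtain ⟨e, rfl⟩ := (hord d).1 hdm
    refine hdf (Finset.mem_image.2 ⟨e, Nat.mem_divisors.2 ⟨?_, hm.ne'⟩, mul_comm e f⟩)
    exact Nat.dvd_of_mul_dvd_mul_left hf ((Nat.dvd_of_mem_divisors hd).trans (mul_comm m f).dvd)

end NumberField

theorem ord_cyclotomic_classification_general
    {K : Type*} [Field K] [NumberField K]
    (α : 𝓞 K) (hαu : ∀ n : ℕ, 0 < n → α ^ n ≠ 1)
    (p : ℕ) (hp : p.Prime) (hpodd : Odd p)
    (hunram : ∀ Q : Ideal (𝓞 K), Q.IsPrime → (p : 𝓞 K) ∈ Q →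
      Ideal.ramificationIdx' (Ideal.span {(p : ℤ)}) Q = 1)
    (P : Ideal (𝓞 K)) (hP : P.IsPrime) (hPbot : P ≠ ⊥) (hPp : (p : 𝓞 K) ∈ P)
    (f : ℕ) (hf : 0 < f) (hf1 : α ^ f - 1 ∈ P)
    (hfmin : ∀ m : ℕ, 0 < m → α ^ m - 1 ∈ P → f ≤ m)
    (δ : ℕ) (hδ : δ = ordIdeal P (Ideal.span {α ^ f - 1}))
    (n : ℕ) (hn : 0 < n) :
    (n = f →
      ordIdeal P (Ideal.span {Polynomial.eval α (Polynomial.cyclotomic n (𝓞 K))}) = δ) ∧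
    (∀ i : ℕ, 1 ≤ i → n = p ^ i * f →
      ordIdeal P (Ideal.span {Polynomial.eval α (Polynomial.cyclotomic n (𝓞 K))}) = 1) ∧
    ((n ≠ f ∧ ∀ i : ℕ, 1 ≤ i → n ≠ p ^ i * f) →
      ordIdeal P (Ideal.span {Polynomial.eval α (Polynomial.cyclotomic n (𝓞 K))}) = 0) := by
  have hpP2 : (p : 𝓞 K) ∉ P ^ 2 := by
    simpa using Ideal.algebraMap_notMem_sq_of_ramificationIdx'_eq_one hPbot
      (by simpa using hp.ne_zero) (hunram P hP hPp)
  have hord := pow_sub_one_mem_iff_dvd hf hf1 hfmin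
  have hg (m : ℕ) (hm : m ≠ 0) : ∑ e ∈ m.divisors,
      ordIdeal P (Ideal.span {(Polynomial.cyclotomic (e * f) (𝓞 K)).eval α})
        = δ + m.factorization p := by
    rw [sum_divisors_ordIdeal_eval_cyclotomic_mul hαu hf hord (Nat.pos_of_ne_zero hm),
      ordIdeal_pow_mul_sub_one hαu hf hord hp hpodd hPp hpP2 hm, hδ]
  refine ⟨?_, ?_, ?_⟩
  · rintro rfl
    simpa using apply_one_of_sum_divisors_eq hg
  · rintro i hi rfl
    obtain ⟨k, rfl⟩ := Nat.exists_eq_add_of_le' hi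
    exact apply_prime_pow_succ_of_sum_divisors_eq hp hg k
  · rintro ⟨hnf, hnp⟩
    by_cases hfn : f ∣ n
    · obtain ⟨m, rfl⟩ := hfn
      rw [mul_comm]
      refine apply_eq_zero_of_sum_divisors_eq hp hg (by rintro rfl; simp at hn) fun hm => ?_
      rcases Nat.eq_zero_or_pos (m.factorization p) with h0 | hpos
      · exact hnf (by rw [hm, h0, pow_zero, mul_one])
      · exact hnp _ hpos (by rw [mul_comm, ← hm])
    · exact ordIdeal_eval_cyclotomic_eq_zero (mt (hord n).1 hfn)

/-- **Lemma (the 𝔭-adic valuation of cyclotomic ideals).**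
Let `α ∈ 𝓞 K` be an admissible Wieferich base, `p` an odd rational prime unramified in
`K` (every prime above `p` has ramification index `1`), `𝔭` a prime above `p` with
`α ∉ 𝔭`, `f = f_α(𝔭)` the order of `α` mod `𝔭` and `δ = ord_𝔭((α^f - 1))`.  Then for
every positive integer `n`: `ord_𝔭((Φ_n(α))) = δ` if `n = f`; `ord_𝔭((Φ_n(α))) = 1` if
`n = pⁱ·f` with `i ≥ 1`; and `ord_𝔭((Φ_n(α))) = 0` otherwise. -/
theorem ord_cyclotomic_classification
    {K : Type*} [Field K] [NumberField K]
    (α : 𝓞 K) (hα0 : α ≠ 0) (hαu : ∀ n : ℕ, 0 < n → α ^ n ≠ 1)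
    (p : ℕ) (hp : p.Prime) (hpodd : Odd p)
    (hunram : ∀ Q : Ideal (𝓞 K), Q.IsPrime → (p : 𝓞 K) ∈ Q →
      Ideal.ramificationIdx' (Ideal.span {(p : ℤ)}) Q = 1)
    (P : Ideal (𝓞 K)) (hP : P.IsPrime) (hPbot : P ≠ ⊥) (hPp : (p : 𝓞 K) ∈ P)
    (hαP : α ∉ P)
    (f : ℕ) (hf : 0 < f) (hf1 : α ^ f - 1 ∈ P)
    (hfmin : ∀ m : ℕ, 0 < m → α ^ m - 1 ∈ P → f ≤ m)
    (δ : ℕ) (hδ : δ = ordIdeal P (Ideal.span {α ^ f - 1}))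
    (n : ℕ) (hn : 0 < n) :
    (n = f →
      ordIdeal P (Ideal.span {Polynomial.eval α (Polynomial.cyclotomic n (𝓞 K))}) = δ) ∧
    (∀ i : ℕ, 1 ≤ i → n = p ^ i * f →
      ordIdeal P (Ideal.span {Polynomial.eval α (Polynomial.cyclotomic n (𝓞 K))}) = 1) ∧
    ((n ≠ f ∧ ∀ i : ℕ, 1 ≤ i → n ≠ p ^ i * f) →
      ordIdeal P (Ideal.span {Polynomial.eval α (Polynomial.cyclotomic n (𝓞 K))}) = 0) :=
  ord_cyclotomic_classification_general α hαu p hp hpodd hunram P hP hPbot hPp f hf hf1 hfmin δ hδ n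
    hn
end

section
/- Let K be an algebraic number field and α ∈ O_K an admissible Wieferich base. If m and n are positive integers with gcd(m, n) = 1, then the greatest common divisor of the ideals (α^m − 1)O_K and (α^n − 1)O_K equals the ideal (α − 1)O_K. -/
open NumberField

/-- **Lemma.** Let `α ∈ 𝓞 K` be an admissible Wieferich base (nonzero, not a root of
unity).  If `gcd(m, n) = 1`, then the gcd (= sum) of the ideals `(α^m - 1)` and
`(α^n - 1)` is the ideal `(α - 1)`. -/
theorem gcd_span_pow_sub_one
    {K : Type*} [Field K] [NumberField K]
    (α : 𝓞 K) (hα0 : α ≠ 0) (hαu : ∀ n : ℕ, 0 < n → α ^ n ≠ 1)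
    (m n : ℕ) (hm : 0 < m) (hn : 0 < n) (hmn : Nat.gcd m n = 1) :
    Ideal.span {α ^ m - 1} + Ideal.span {α ^ n - 1} = Ideal.span {α - 1} := by
  set I : Ideal (𝓞 K) := Ideal.span {α ^ m - 1} + Ideal.span {α ^ n - 1} with hI
  apply le_antisymm
  · apply sup_le <;>
    · rw [Ideal.span_singleton_le_span_singleton]
      simpa using sub_dvd_pow_sub_pow α 1 _
  · rw [Ideal.span_le, Set.singleton_subset_iff]
    have key : ∀ k : ℕ, α ^ k - 1 ∈ I → (Ideal.Quotient.mk I α) ^ k = 1 := by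
      intro k hk
      rw [← map_pow, ← map_one (Ideal.Quotient.mk I), Ideal.Quotient.mk_eq_mk_iff_sub_mem]
      exact hk
    have hm' : (Ideal.Quotient.mk I α) ^ m = 1 :=
      key m (Ideal.mem_sup_left (Ideal.subset_span rfl))
    have hn' : (Ideal.Quotient.mk I α) ^ n = 1 :=
      key n (Ideal.mem_sup_right (Ideal.subset_span rfl))
    have h1 : orderOf (Ideal.Quotient.mk I α) ∣ 1 := by
      rw [← hmn]
      exact Nat.dvd_gcd (orderOf_dvd_of_pow_eq_one hm') (orderOf_dvd_of_pow_eq_one hn')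
    have : Ideal.Quotient.mk I α = 1 := orderOf_eq_one_iff.mp (Nat.dvd_one.mp h1)
    exact (Ideal.Quotient.mk_eq_mk_iff_sub_mem α 1).mp (by rw [map_one]; exact this)
end
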